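/- Let S be a finite set of solutions, G a set of m groups, true utilities u and noisy utilities u_δ with |u_δ(s,g) − u(s,g)| ≤ δ for all s, g, and ε ≥ 2δ. Define the noisy recursive sets T_i: T_0 = S, T_i = { s ∈ T_{i-1} : u_δ(s,[i]) ≥ max_{s'∈T_{i-1}} u_δ(s',[i]) − ε }. Define pointwise-slack sets B_i with respect to the true utilities u using slack β_i(s) = ε + 2δ if s ∈ T_i and ε − 2δ otherwise: B_0 = S, B_i = { s ∈ B_{i-1} : u(s,[i]) ≥ max_{s'∈B_{i-1}} u(s',[i]) − β_i(s) }. Then T_i = B_i for all i = 0,...,m. In particular, any solution that is ε-significant with respect to the noisy utilities is (ε−2δ, ε+2δ)-significant with respect to the true utilities. -/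

import Mathlib

/-!
The `i`-th smallest entry of a vector moves by at most `δ` when every entry does, so on the
current set `T_{i-1}` the noisy and true `i`-th smallest utilities differ by at most `δ`.
Hence a solution within `ε` of the noisy maximum is within `ε + 2δ` of the true maximum, and a
solution within `ε - 2δ` of the true maximum is within `ε` of the noisy maximum. Giving each
solution the slack matching its fate in the noisy filter therefore makes the two filters
select the same solutions, and induction on `i` gives `T_i = B_i`.
-/

open scoped Classical

/-- The vector of the values of `w` sorted in nondecreasing order;
`sortedVec m w i` is the `i`-th smallest value of `w`. -/
noncomputable def sortedVec (m : ℕ) (w : Fin m → ℝ) : Fin m → ℝ :=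
  fun i => ((Finset.univ.val.map w).sort (· ≤ ·)).get ⟨i.1, by simp⟩

/-- Lexicographic order on `ℝ^m`: `lexLE m v u` means `v ⪯ u`, i.e. either `v = u`
or at the first coordinate where they differ, `u` is strictly larger. -/
def lexLE (m : ℕ) (v u : Fin m → ℝ) : Prop :=
  v = u ∨ ∃ i : Fin m, (∀ j < i, v j = u j) ∧ v i < u i

/-- The recursively defined sets `S_i^α`: `S_0^α = S` and `S_i^α` keeps those solutions of
`S_{i-1}^α` whose `i`-th smallest group utility is within `α_i` of the maximum `i`-th smallest
group utility over `S_{i-1}^α` (expressed as: at least every other value minus `α_i`). -/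
noncomputable def recSets {σ : Type*} (m : ℕ) (S : Finset σ)
    (u : σ → Fin m → ℝ) (α : Fin m → ℝ) : ℕ → Finset σ
  | 0 => S
  | (i+1) =>
    if h : i < m then
      (recSets m S u α i).filter (fun s => ∀ t ∈ recSets m S u α i,
        sortedVec m (u s) ⟨i, h⟩ ≥ sortedVec m (u t) ⟨i, h⟩ - α ⟨i, h⟩)
    else recSets m S u α i


/-- Recursively defined sets with a solution-dependent slack function `β i s`. -/
noncomputable def recSetsF {σ : Type*} (m : ℕ) (S : Finset σ)
    (u : σ → Fin m → ℝ) (β : Fin m → σ → ℝ) : ℕ → Finset σ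
  | 0 => S
  | (i+1) =>
    if h : i < m then
      (recSetsF m S u β i).filter (fun s => ∀ t ∈ recSetsF m S u β i,
        sortedVec m (u s) ⟨i, h⟩ ≥ sortedVec m (u t) ⟨i, h⟩ - β ⟨i, h⟩ s)
    else recSetsF m S u β i

theorem List.Pairwise.getElem_le_iff_lt_countP {α : Type*} [LinearOrder α] {l : List α}
    (hl : l.Pairwise (· ≤ ·)) {i : ℕ} (hi : i < l.length) (x : α) :
    l[i] ≤ x ↔ i < l.countP (· ≤ x) := by
  constructor
  · intro hix
    have htake : (l.take (i + 1)).countP (· ≤ x) = i + 1 := by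
      rw [List.countP_eq_length.2, List.length_take_of_le hi]
      intro a ha
      obtain ⟨j, hj, rfl⟩ := List.getElem_of_mem ha
      rw [List.length_take_of_le hi] at hj
      rw [List.getElem_take, decide_eq_true_eq]
      exact (hl.rel_get_of_le (a := ⟨j, by omega⟩) (b := ⟨i, hi⟩) (by simp; omega)).trans hix
    have := (List.take_sublist (i + 1) l).countP_le (p := (· ≤ x))
    omega
  · intro hlt
    by_contra! hxi
    have hdrop : (l.drop i).countP (· ≤ x) = 0 := by
      rw [List.countP_eq_zero]
      intro a ha
      obtain ⟨j, hj, rfl⟩ := List.getElem_of_mem ha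
      rw [List.getElem_drop, decide_eq_true_eq, not_le]
      exact hxi.trans_le (hl.rel_get_of_le (a := ⟨i, hi⟩) (b := ⟨i + j, by simp at hj; omega⟩)
        (by simp))
    have htake := List.countP_le_length (p := (· ≤ x)) (l := l.take i)
    rw [List.length_take] at htake
    rw [← List.take_append_drop i l, List.countP_append, hdrop] at hlt
    omega

theorem sortedVec_le_iff {m : ℕ} (w : Fin m → ℝ) (i : Fin m) (x : ℝ) :
    sortedVec m w i ≤ x ↔ i.1 < (Finset.univ.filter (fun g => w g ≤ x)).card := by
  have hsorted := Multiset.pairwise_sort (Finset.univ.val.map w) (· ≤ ·)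
  rw [sortedVec, List.get_eq_getElem, hsorted.getElem_le_iff_lt_countP, ← Multiset.coe_countP,
    Multiset.sort_eq, Multiset.countP_map, Finset.card_def, Finset.filter_val]

theorem sortedVec_le_sortedVec_add {m : ℕ} {v w : Fin m → ℝ} {c : ℝ} (h : ∀ g, v g ≤ w g + c)
    (i : Fin m) : sortedVec m v i ≤ sortedVec m w i + c := by
  rw [sortedVec_le_iff]
  calc i.1 < (Finset.univ.filter (fun g => w g ≤ sortedVec m w i)).card :=
        (sortedVec_le_iff w i _).1 le_rfl
    _ ≤ (Finset.univ.filter (fun g => v g ≤ sortedVec m w i + c)).card :=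
        Finset.card_le_card (Finset.monotone_filter_right _ fun g _ hg => by linarith [h g])

theorem abs_sortedVec_sub_le {m : ℕ} {v w : Fin m → ℝ} {c : ℝ} (h : ∀ g, |v g - w g| ≤ c)
    (i : Fin m) : |sortedVec m v i - sortedVec m w i| ≤ c := by
  have hvw : sortedVec m v i ≤ sortedVec m w i + c :=
    sortedVec_le_sortedVec_add (fun g => by linarith [(abs_sub_le_iff.1 (h g)).1]) i
  have hwv : sortedVec m w i ≤ sortedVec m v i + c :=
    sortedVec_le_sortedVec_add (fun g => by linarith [(abs_sub_le_iff.1 (h g)).2]) i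
  exact abs_sub_le_iff.2 ⟨by linarith, by linarith⟩

theorem Finset.filter_forall_ge_sub_eq_of_abs_sub_le {ι : Type*} {T : Finset ι} {a b : ι → ℝ}
    {δ ε : ℝ} (hab : ∀ t ∈ T, |a t - b t| ≤ δ) :
    T.filter (fun s => ∀ t ∈ T, a s ≥ a t - ε) =
      T.filter (fun s => ∀ t ∈ T, b s ≥ b t -
        if s ∈ T.filter (fun s => ∀ t ∈ T, a s ≥ a t - ε) then ε + 2 * δ else ε - 2 * δ) := by
  refine Finset.filter_congr fun s hs => ?_
  obtain ⟨hs_le, hs_ge⟩ := abs_sub_le_iff.1 (hab s hs)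
  by_cases hnear : ∀ t ∈ T, a s ≥ a t - ε
  · rw [if_pos (Finset.mem_filter.2 ⟨hs, hnear⟩)]
    refine iff_of_true hnear fun t ht => ?_
    linarith [hnear t ht, (abs_sub_le_iff.1 (hab t ht)).2, hs_le]
  · rw [if_neg fun h => hnear (Finset.mem_filter.1 h).2]
    refine iff_of_false hnear fun hfar => hnear fun t ht => ?_
    linarith [hfar t ht, (abs_sub_le_iff.1 (hab t ht)).1, hs_ge]

section RecSets

variable {σ : Type*} {m : ℕ} {S : Finset σ}

theorem recSets_succ (u : σ → Fin m → ℝ) (α : Fin m → ℝ) {i : ℕ} (hi : i < m) :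
    recSets m S u α (i + 1) = (recSets m S u α i).filter (fun s => ∀ t ∈ recSets m S u α i,
      sortedVec m (u s) ⟨i, hi⟩ ≥ sortedVec m (u t) ⟨i, hi⟩ - α ⟨i, hi⟩) := by
  rw [recSets, dif_pos hi]

theorem recSetsF_succ (u : σ → Fin m → ℝ) (β : Fin m → σ → ℝ) {i : ℕ} (hi : i < m) :
    recSetsF m S u β (i + 1) = (recSetsF m S u β i).filter (fun s => ∀ t ∈ recSetsF m S u β i,
      sortedVec m (u s) ⟨i, hi⟩ ≥ sortedVec m (u t) ⟨i, hi⟩ - β ⟨i, hi⟩ s) := by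
  rw [recSetsF, dif_pos hi]

theorem recSets_subset (u : σ → Fin m → ℝ) (α : Fin m → ℝ) (i : ℕ) : recSets m S u α i ⊆ S := by
  induction i with
  | zero => exact subset_rfl
  | succ i ih =>
    rw [recSets]
    split
    · exact (Finset.filter_subset _ _).trans ih
    · exact ih

theorem recSets_eq_recSetsF_of_abs_sub_le {u uδ : σ → Fin m → ℝ} {δ : ℝ}
    (hnoise : ∀ s ∈ S, ∀ g, |uδ s g - u s g| ≤ δ) (α : Fin m → ℝ) {i : ℕ} (hi : i ≤ m) :
    recSets m S uδ α i = recSetsF m S u (fun i s =>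
      if s ∈ recSets m S uδ α (i.1 + 1) then α i + 2 * δ else α i - 2 * δ) i := by
  induction i with
  | zero => rfl
  | succ i ih =>
    have hi : i < m := hi
    rw [recSetsF_succ _ _ hi]
    beta_reduce
    rw [recSets_succ _ _ hi, ← ih hi.le]
    exact Finset.filter_forall_ge_sub_eq_of_abs_sub_le fun t ht =>
      abs_sortedVec_sub_le (hnoise t (recSets_subset uδ α i ht)) _

end RecSets

theorem noisy_significance_general {σ : Type*} (S : Finset σ) (m : ℕ)
    (u uδ : σ → Fin m → ℝ) (δ ε : ℝ) (hδ : 0 ≤ δ)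
    (hnoise : ∀ s ∈ S, ∀ g : Fin m, |uδ s g - u s g| ≤ δ) :
    (∀ i : ℕ, i ≤ m →
      recSets m S uδ (fun _ => ε) i =
        recSetsF m S u
          (fun i s => if s ∈ recSets m S uδ (fun _ => ε) (i.1 + 1) then ε + 2 * δ
            else ε - 2 * δ) i) ∧
    (∀ s ∈ recSets m S uδ (fun _ => ε) m,
      ∃ β : Fin m → σ → ℝ, (∀ i t, β i t ∈ Set.Icc (ε - 2 * δ) (ε + 2 * δ)) ∧
        s ∈ recSetsF m S u β m) := by
  have hTB := fun i (hi : i ≤ m) => recSets_eq_recSetsF_of_abs_sub_le hnoise (fun _ => ε) hi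
  refine ⟨hTB, fun s hs => ⟨_, fun i t => ?_, hTB m le_rfl ▸ hs⟩⟩
  split_ifs <;> constructor <;> linarith

/-- Lemma 16: let `T_i` be the ε-significance recursion computed with the noisy utilities
`uδ`, and let `B_i` be the recursion with respect to the true utilities `u` using the
pointwise slack `β i s = ε + 2δ` if `s ∈ T_i` and `ε − 2δ` otherwise. Then `T_i = B_i` for
all `i ≤ m`; in particular every solution that is ε-significant with respect to the noisy
utilities is (ε − 2δ, ε + 2δ)-significant with respect to the true utilities. -/
theorem noisy_significance {σ : Type*} (S : Finset σ) (m : ℕ)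
    (u uδ : σ → Fin m → ℝ) (δ ε : ℝ) (hδ : 0 ≤ δ) (hε : 2 * δ ≤ ε)
    (hnoise : ∀ s ∈ S, ∀ g : Fin m, |uδ s g - u s g| ≤ δ) :
    (∀ i : ℕ, i ≤ m →
      recSets m S uδ (fun _ => ε) i =
        recSetsF m S u
          (fun i s => if s ∈ recSets m S uδ (fun _ => ε) (i.1 + 1) then ε + 2 * δ
            else ε - 2 * δ) i) ∧
    (∀ s ∈ recSets m S uδ (fun _ => ε) m,
      ∃ β : Fin m → σ → ℝ, (∀ i t, β i t ∈ Set.Icc (ε - 2 * δ) (ε + 2 * δ)) ∧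
        s ∈ recSetsF m S u β m) :=
  noisy_significance_general S m u uδ δ ε hδ hnoise
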